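/- Let M be an F∞-module, and let F∞ denote the three-element F∞-algebra on {-1, 0, 1} with multiplication inherited from the integers, the usual negation, and addition given by a + b = a if a = b and a + b = 0 otherwise. Then the map f ↦ {a ∈ M : f(a) = 1} is a bijection between the set of homomorphisms f : M → F∞ (maps with f(0) = 0, f(-m) = -f(m), and f(m+n) = f(m)+f(n)) and the set of filters on M. -/

import Mathlib

class FinfModule (M : Type*) extends Zero M, Neg M, Add M where
  add_assoc : ∀ a b c : M, a + b + c = a + (b + c)
  add_comm : ∀ a b : M, a + b = b + a
  add_idem : ∀ a : M, a + a = a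
  add_neg : ∀ a : M, a + -a = 0
  neg_add : ∀ a b : M, -(a + b) = -a + -b
  neg_neg : ∀ a : M, - -a = a

inductive Finf : Type
  | zero : Finf
  | one : Finf
  | negOne : Finf
deriving DecidableEq

instance : Zero Finf := ⟨Finf.zero⟩
instance : One Finf := ⟨Finf.one⟩

def Finf.neg : Finf → Finf
  | .zero => .zero
  | .one => .negOne
  | .negOne => .one

instance : Neg Finf := ⟨Finf.neg⟩

def Finf.add (a b : Finf) : Finf := if a = b then a else Finf.zero

instance : Add Finf := ⟨Finf.add⟩

def Finf.mul : Finf → Finf → Finf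
  | .zero, _ => .zero
  | _, .zero => .zero
  | .one, b => b
  | .negOne, b => b.neg

instance : Mul Finf := ⟨Finf.mul⟩

def IsFinfHom {M : Type*} [FinfModule M] (f : M → Finf) : Prop :=
  f 0 = 0 ∧ (∀ m : M, f (-m) = -(f m)) ∧ ∀ m n : M, f (m + n) = f m + f n

def IsFinfFilter {M : Type*} [FinfModule M] (F : Set M) : Prop :=
  (0 : M) ∉ F ∧ (∀ a ∈ F, ∀ b ∈ F, a + b ∈ F) ∧
    ∀ a b : M, a + b ∈ F → a ∈ F ∧ b ∈ F

/-!
A homomorphism `f : M → F∞` is odd, so it is determined by its positive set `{a | f a = 1}`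
(its negative set is the negative of it). In `F∞` a sum is `1` exactly when both summands are,
which turns additivity of `f` into the filter axiom `a + b ∈ F ↔ a ∈ F ∧ b ∈ F`; conversely a
filter `F` defines the odd map sending `F` to `1`, `-F` to `-1` and everything else to `0`,
and `F` and `-F` are disjoint because `a + -a = 0 ∉ F`.
-/

namespace Finf

theorem ext_of_eq_one_iff {x y : Finf} (h : x = 1 ↔ y = 1) (hneg : -x = 1 ↔ -y = 1) :
    x = y := by
  revert h hneg
  cases x <;> cases y <;> decide

theorem add_eq_one_iff {x y : Finf} : x + y = 1 ↔ x = 1 ∧ y = 1 := by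
  cases x <;> cases y <;> decide

theorem neg_add (x y : Finf) : -(x + y) = -x + -y := by
  cases x <;> cases y <;> rfl

theorem neg_neg (x : Finf) : - -x = x := by
  cases x <;> rfl

end Finf

namespace FinfModule

variable {M : Type*} [FinfModule M]

theorem zero_add_eq_zero (x : M) : (0 : M) + x = 0 := by
  calc (0 : M) + x = x + -x + x := by rw [add_neg]
    _ = x + x + -x := by rw [add_assoc, add_comm (-x) x, ← add_assoc]
    _ = 0 := by rw [add_idem, add_neg]

protected theorem neg_zero : -(0 : M) = 0 := by
  calc -(0 : M) = -((0 : M) + -0) := by rw [zero_add_eq_zero]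
    _ = 0 := by rw [neg_add, neg_neg, add_comm, zero_add_eq_zero]

end FinfModule

section FilterHom

variable {M : Type*} [FinfModule M]

theorem isFinfFilter_iff {F : Set M} :
    IsFinfFilter F ↔ (0 : M) ∉ F ∧ ∀ a b : M, a + b ∈ F ↔ a ∈ F ∧ b ∈ F :=
  ⟨fun ⟨h0, hadd, hup⟩ => ⟨h0, fun a b => ⟨hup a b, fun ⟨ha, hb⟩ => hadd a ha b hb⟩⟩,
    fun ⟨h0, h⟩ => ⟨h0, fun a ha b hb => (h a b).2 ⟨ha, hb⟩, fun a b => (h a b).1⟩⟩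

theorem IsFinfFilter.neg_notMem {F : Set M} (hF : IsFinfFilter F) {a : M} (ha : a ∈ F) :
    -a ∉ F := fun hna => hF.1 (FinfModule.add_neg a ▸ hF.2.1 a ha (-a) hna)

theorem isFinfHom_iff {f : M → Finf} :
    IsFinfHom f ↔ (∀ m : M, f (-m) = -(f m)) ∧ IsFinfFilter {a : M | f a = 1} := by
  simp only [isFinfFilter_iff, Set.mem_ofPred_eq]
  constructor
  · rintro ⟨h0, hneg, hadd⟩
    exact ⟨hneg, by rw [h0]; decide, fun a b => by rw [hadd, Finf.add_eq_one_iff]⟩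
  · rintro ⟨hneg, h0, hadd⟩
    refine ⟨Finf.ext_of_eq_one_iff ?_ ?_, hneg, fun m n => Finf.ext_of_eq_one_iff ?_ ?_⟩
    · exact iff_of_false h0 (by decide)
    · rw [← hneg, FinfModule.neg_zero]
      exact iff_of_false h0 (by decide)
    · rw [hadd, Finf.add_eq_one_iff]
    · rw [← hneg, FinfModule.neg_add, hadd, Finf.neg_add, Finf.add_eq_one_iff, hneg, hneg]

open Classical in
noncomputable def homOfFilter (F : Set M) (a : M) : Finf :=
  if a ∈ F then 1 else if -a ∈ F then -1 else 0

theorem homOfFilter_eq_one_iff {F : Set M} {a : M} : homOfFilter F a = 1 ↔ a ∈ F := by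
  unfold homOfFilter
  split_ifs with ha hna
  · exact iff_of_true rfl ha
  · exact iff_of_false (by decide) ha
  · exact iff_of_false (by decide) ha

theorem neg_homOfFilter_eq_one_iff {F : Set M} (hF : IsFinfFilter F) {a : M} :
    -homOfFilter F a = 1 ↔ -a ∈ F := by
  unfold homOfFilter
  split_ifs with ha hna
  · exact iff_of_false (by decide) (hF.neg_notMem ha)
  · exact iff_of_true rfl hna
  · exact iff_of_false (by decide) hna

theorem homOfFilter_neg {F : Set M} (hF : IsFinfFilter F) (a : M) :
    homOfFilter F (-a) = -homOfFilter F a := by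
  refine Finf.ext_of_eq_one_iff ?_ ?_
  · rw [homOfFilter_eq_one_iff, neg_homOfFilter_eq_one_iff hF]
  · rw [neg_homOfFilter_eq_one_iff hF, FinfModule.neg_neg, Finf.neg_neg,
      homOfFilter_eq_one_iff]

theorem setOf_homOfFilter_eq_one (F : Set M) : {a : M | homOfFilter F a = 1} = F :=
  Set.ext fun _ => homOfFilter_eq_one_iff

theorem isFinfHom_homOfFilter {F : Set M} (hF : IsFinfFilter F) :
    IsFinfHom (homOfFilter F) :=
  isFinfHom_iff.2 ⟨homOfFilter_neg hF, (setOf_homOfFilter_eq_one F).symm ▸ hF⟩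

theorem homOfFilter_setOf_eq_one {f : M → Finf} (hf : IsFinfHom f) :
    homOfFilter {a : M | f a = 1} = f := by
  have hF := (isFinfHom_iff.1 hf).2
  funext a
  refine Finf.ext_of_eq_one_iff homOfFilter_eq_one_iff ?_
  rw [neg_homOfFilter_eq_one_iff hF, Set.mem_ofPred_eq, hf.2.1]

end FilterHom

theorem stmt3 {M : Type*} [FinfModule M] :
    ∃ e : {f : M → Finf // IsFinfHom f} ≃ {F : Set M // IsFinfFilter F},
      ∀ f : {f : M → Finf // IsFinfHom f}, (e f : Set M) = {a : M | f.1 a = 1} :=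
  ⟨{ toFun := fun f => ⟨{a : M | f.1 a = 1}, (isFinfHom_iff.1 f.2).2⟩
     invFun := fun F => ⟨homOfFilter F.1, isFinfHom_homOfFilter F.2⟩
     left_inv := fun f => Subtype.ext (homOfFilter_setOf_eq_one f.2)
     right_inv := fun F => Subtype.ext (setOf_homOfFilter_eq_one F.1) },
    fun _ => rfl⟩
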